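/- arXiv:2309.16156 — 2 statements merged into one kernel-verified Lean document; each statement's English description precedes it below -/
import Mathlib

section
/- Let G₁ and G₂ be finite connected simple graphs with n₁ and n₂ vertices, distance matrices D₁, D₂, and suppose each Gᵢ has a nonnegative curvature (an entrywise nonnegative wᵢ with Dᵢwᵢ = nᵢ·𝟏). Let H be the graph obtained by adding an edge between a vertex u ∈ V(G₁) and a vertex v ∈ V(G₂) and then contracting this edge (so H has n₁+n₂−1 vertices, with u and v identified). Then H has a curvature w (D_H w = (n₁+n₂−1)·𝟏) which is nonnegative at every vertex except possibly the merged vertex. -/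
/-- The graph obtained by merging `G₁` and `G₂` at a vertex: add an edge between
`u ∈ V(G₁)` and `v ∈ V(G₂)` and contract it, identifying `u` and `v`.  The merged
vertex is represented by `Sum.inl u`. -/
def mergeGraph {V₁ V₂ : Type*} (G₁ : SimpleGraph V₁) (G₂ : SimpleGraph V₂)
    (u : V₁) (v : V₂) : SimpleGraph (V₁ ⊕ {y : V₂ // y ≠ v}) :=
  SimpleGraph.fromRel (fun x y =>
    (∃ a b, x = Sum.inl a ∧ y = Sum.inl b ∧ G₁.Adj a b) ∨
    (∃ a b, x = Sum.inr a ∧ y = Sum.inr b ∧ G₂.Adj a.1 b.1) ∨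
    (∃ b, x = Sum.inl u ∧ y = Sum.inr b ∧ G₂.Adj v b.1))

/-! `a ↦ (a, v)`, `y ↦ (u, y)` embeds the merged graph `H` isometrically into the box product
`G₁ □ G₂`, so `d_H(x, x') = d₁(x₁, x'₁) + d₂(x₂, x'₂)`. Push `c₁ w₁` and `c₂ w₂` forward to `H` and
subtract `c` at the merged vertex `⋆`; writing `Sᵢ = ∑ wᵢ` and `nᵢ = |V(Gᵢ)|`, this gives
`(D_H w)(x) = c₁ n₁ + c₂ n₂ + d₁(x₁, u) (c₂ S₂ - c) + d₂(x₂, v) (c₁ S₁ - c)`.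
Since `Dᵢ wᵢ = nᵢ 𝟏` with `wᵢ ≥ 0` forces `Sᵢ > 0`, we can choose `c₁, c₂ ≥ 0` with
`c₁ S₁ = c₂ S₂ =: c` and `c₁ n₁ + c₂ n₂ = n₁ + n₂ - 1`; only `⋆` can then carry a negative weight. -/

namespace SimpleGraph

variable {V W : Type*}

theorem Hom.edist_le {G : SimpleGraph V} {G' : SimpleGraph W} (f : G →g G') (a b : V) :
    G'.edist (f a) (f b) ≤ G.edist a b := by
  by_cases h : G.Reachable a b
  · obtain ⟨p, hp⟩ := h.exists_walk_length_eq_edist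
    rw [← hp, ← Walk.length_map f]
    exact SimpleGraph.edist_le _
  · rw [edist_eq_top_of_not_reachable h]
    exact le_top

theorem dist_boxProd {G : SimpleGraph V} {H : SimpleGraph W} {x y : V × W}
    (h₁ : G.Reachable x.1 y.1) (h₂ : H.Reachable x.2 y.2) :
    (G □ H).dist x y = G.dist x.1 y.1 + H.dist x.2 y.2 := by
  rw [dist, edist_boxProd, ENat.toNat_add (edist_ne_top_iff_reachable.2 h₁)
    (edist_ne_top_iff_reachable.2 h₂), dist, dist]

noncomputable def distMatrix (G : SimpleGraph V) (R : Type*) [NatCast R] : Matrix V V R :=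
  Matrix.of fun a b => (G.dist a b : R)

end SimpleGraph

open Matrix

theorem Matrix.sum_pos_of_mulVec_ne_zero {ι κ R : Type*} [Fintype ι] [Semiring R] [PartialOrder R]
    [IsOrderedAddMonoid R] {M : Matrix κ ι R} {w : ι → R} (hw : ∀ i, 0 ≤ w i) (h : M *ᵥ w ≠ 0) :
    0 < ∑ i, w i := by
  refine (Finset.sum_nonneg fun i _ => hw i).lt_of_ne fun hsum => h ?_
  have hw0 : w = 0 := funext fun i =>
    (Finset.sum_eq_zero_iff_of_nonneg fun i _ => hw i).1 hsum.symm i (Finset.mem_univ i)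
  rw [hw0, Matrix.mulVec_zero]

theorem exists_nonneg_mul_eq_mul_and_add_eq {K : Type*} [Field K] [LinearOrder K]
    [IsStrictOrderedRing K] {S₁ S₂ n₁ n₂ m : K} (hS₁ : 0 < S₁) (hS₂ : 0 < S₂) (hn₁ : 0 < n₁)
    (hn₂ : 0 ≤ n₂) (hm : 0 ≤ m) :
    ∃ c₁ c₂ : K, 0 ≤ c₁ ∧ 0 ≤ c₂ ∧ c₁ * S₁ = c₂ * S₂ ∧ c₁ * n₁ + c₂ * n₂ = m := by
  have hden : 0 < n₁ * S₂ + n₂ * S₁ := by positivity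
  refine ⟨m * S₂ / (n₁ * S₂ + n₂ * S₁), m * S₁ / (n₁ * S₂ + n₂ * S₁), by positivity,
    by positivity, by ring, ?_⟩
  field_simp

open SimpleGraph

namespace mergeGraph

variable {V₁ V₂ : Type*} {G₁ : SimpleGraph V₁} {G₂ : SimpleGraph V₂} {u : V₁} {v : V₂}

theorem adj_inl_inl {a b : V₁} (h : G₁.Adj a b) :
    (mergeGraph G₁ G₂ u v).Adj (.inl a) (.inl b) := by
  rw [mergeGraph, fromRel_adj]
  exact ⟨by simpa using h.ne, .inl (.inl ⟨a, b, rfl, rfl, h⟩)⟩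

variable (G₁ G₂ u v)

def inlHom : G₁ →g mergeGraph G₁ G₂ u v := ⟨Sum.inl, adj_inl_inl⟩

@[simp]
theorem inlHom_apply (a : V₁) : inlHom G₁ G₂ u v a = .inl a := rfl

def toBoxProd : mergeGraph G₁ G₂ u v →g G₁ □ G₂ where
  toFun := Sum.elim (fun a => (a, v)) (fun y => (u, y.1))
  map_rel' {x y} h := by
    rw [mergeGraph, fromRel_adj] at h
    obtain ⟨-, h | h⟩ := h
    · rcases h with ⟨a, b, rfl, rfl, h⟩ | ⟨a, b, rfl, rfl, h⟩ | ⟨b, rfl, rfl, h⟩ <;> simp [h]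
    · rcases h with ⟨a, b, rfl, rfl, h⟩ | ⟨a, b, rfl, rfl, h⟩ | ⟨b, rfl, rfl, h⟩ <;> simp [h.symm]

@[simp]
theorem toBoxProd_inl (a : V₁) : toBoxProd G₁ G₂ u v (.inl a) = (a, v) := rfl

variable [DecidableEq V₂]

def incl₂ (y : V₂) : V₁ ⊕ {y : V₂ // y ≠ v} :=
  if h : y = v then .inl u else .inr ⟨y, h⟩

variable {G₁ G₂ u v}

@[simp]
theorem incl₂_self : incl₂ u v v = .inl u := dif_pos rfl

theorem incl₂_of_ne {y : V₂} (h : y ≠ v) : incl₂ u v y = .inr ⟨y, h⟩ := dif_neg h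

@[simp]
theorem incl₂_val (y : {y : V₂ // y ≠ v}) : incl₂ u v y.1 = .inr y := incl₂_of_ne y.2

@[simp]
theorem toBoxProd_incl₂ (y : V₂) : toBoxProd G₁ G₂ u v (incl₂ u v y) = (u, y) := by
  by_cases h : y = v
  · subst h; simp
  · simp [incl₂_of_ne h, toBoxProd]

theorem adj_incl₂ {x y : V₂} (h : G₂.Adj x y) :
    (mergeGraph G₁ G₂ u v).Adj (incl₂ u v x) (incl₂ u v y) := by
  rw [mergeGraph, fromRel_adj]
  by_cases hx : x = v
  · subst hx
    simp [incl₂_of_ne h.ne', h]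
  · by_cases hy : y = v
    · subst hy
      simp [incl₂_of_ne hx, h.symm]
    · simp [incl₂_of_ne hx, incl₂_of_ne hy, h, h.ne]

variable (G₁ G₂ u v)

def incl₂Hom : G₂ →g mergeGraph G₁ G₂ u v := ⟨incl₂ u v, adj_incl₂⟩

@[simp]
theorem incl₂Hom_apply (y : V₂) : incl₂Hom G₁ G₂ u v y = incl₂ u v y := rfl

variable {G₁ G₂ u v}

theorem edist_inl_incl₂_le (a : V₁) (y : V₂) :
    (mergeGraph G₁ G₂ u v).edist (.inl a) (incl₂ u v y) ≤ G₁.edist a u + G₂.edist v y :=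
  calc (mergeGraph G₁ G₂ u v).edist (.inl a) (incl₂ u v y)
      ≤ (mergeGraph G₁ G₂ u v).edist (.inl a) (.inl u) +
          (mergeGraph G₁ G₂ u v).edist (incl₂ u v v) (incl₂ u v y) := by
        rw [incl₂_self]; exact SimpleGraph.edist_triangle
    _ ≤ G₁.edist a u + G₂.edist v y :=
        add_le_add ((inlHom G₁ G₂ u v).edist_le a u) ((incl₂Hom G₁ G₂ u v).edist_le v y)

theorem edist_toBoxProd (x x' : V₁ ⊕ {y : V₂ // y ≠ v}) :
    (G₁ □ G₂).edist (toBoxProd G₁ G₂ u v x) (toBoxProd G₁ G₂ u v x') =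
      (mergeGraph G₁ G₂ u v).edist x x' := by
  refine le_antisymm ((toBoxProd G₁ G₂ u v).edist_le x x') ?_
  rcases x with a | y <;> rcases x' with b | z
  · simpa using (inlHom G₁ G₂ u v).edist_le a b
  · rw [← incl₂_val z, toBoxProd_inl, toBoxProd_incl₂, edist_boxProd]
    exact edist_inl_incl₂_le a z.1
  · rw [← incl₂_val y, toBoxProd_inl, toBoxProd_incl₂, edist_boxProd,
      SimpleGraph.edist_comm, SimpleGraph.edist_comm (G := G₁), SimpleGraph.edist_comm (G := G₂)]
    exact edist_inl_incl₂_le b y.1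
  · rw [← incl₂_val (u := u) y, ← incl₂_val (u := u) z, toBoxProd_incl₂, toBoxProd_incl₂,
      edist_boxProd, SimpleGraph.edist_self, zero_add]
    exact (incl₂Hom G₁ G₂ u v).edist_le y z

theorem dist_toBoxProd (x x' : V₁ ⊕ {y : V₂ // y ≠ v}) :
    (G₁ □ G₂).dist (toBoxProd G₁ G₂ u v x) (toBoxProd G₁ G₂ u v x') =
      (mergeGraph G₁ G₂ u v).dist x x' := by
  rw [SimpleGraph.dist, edist_toBoxProd, SimpleGraph.dist]

theorem dist_eq (hG₁ : G₁.Connected) (hG₂ : G₂.Connected) (x x' : V₁ ⊕ {y : V₂ // y ≠ v}) :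
    (mergeGraph G₁ G₂ u v).dist x x' =
      G₁.dist (toBoxProd G₁ G₂ u v x).1 (toBoxProd G₁ G₂ u v x').1 +
        G₂.dist (toBoxProd G₁ G₂ u v x).2 (toBoxProd G₁ G₂ u v x').2 := by
  rw [← dist_toBoxProd, dist_boxProd (hG₁ _ _) (hG₂ _ _)]

section Curvature

variable {R : Type*} [DecidableEq V₁]

variable (u v) in
/-- The sum of the pushforwards of `f₁` and `f₂` to the merged graph; both contribute at the
merged vertex. -/
def mergeVec [AddZeroClass R] (f₁ : V₁ → R) (f₂ : V₂ → R) : V₁ ⊕ {y : V₂ // y ≠ v} → R :=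
  Sum.elim (f₁ + Pi.single u (f₂ v)) fun y => f₂ y

variable [Fintype V₁] [Fintype V₂]

theorem sum_mul_mergeVec [NonUnitalNonAssocSemiring R] (F : V₁ ⊕ {y : V₂ // y ≠ v} → R)
    (f₁ : V₁ → R) (f₂ : V₂ → R) :
    ∑ x, F x * mergeVec u v f₁ f₂ x =
      ∑ a, F (.inl a) * f₁ a + ∑ y, F (incl₂ u v y) * f₂ y := by
  rw [Fintype.sum_sum_type, Fintype.sum_eq_add_sum_subtype_ne _ v]
  simp [mergeVec, mul_add, Finset.sum_add_distrib, Pi.single_apply, add_assoc]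

theorem mulVec_mergeVec [CommSemiring R] (hG₁ : G₁.Connected) (hG₂ : G₂.Connected)
    (f₁ : V₁ → R) (f₂ : V₂ → R) (x : V₁ ⊕ {y : V₂ // y ≠ v}) :
    ((mergeGraph G₁ G₂ u v).distMatrix R *ᵥ mergeVec u v f₁ f₂) x =
      (G₁.distMatrix R *ᵥ f₁) (toBoxProd G₁ G₂ u v x).1 +
        (G₂.distMatrix R *ᵥ f₂) (toBoxProd G₁ G₂ u v x).2 +
        G₂.dist (toBoxProd G₁ G₂ u v x).2 v * ∑ a, f₁ a +
        G₁.dist (toBoxProd G₁ G₂ u v x).1 u * ∑ y, f₂ y := by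
  simp only [Matrix.mulVec, dotProduct, distMatrix, Matrix.of_apply]
  rw [sum_mul_mergeVec]
  simp only [dist_eq hG₁ hG₂, toBoxProd_inl, toBoxProd_incl₂, Nat.cast_add, add_mul,
    Finset.sum_add_distrib, ← Finset.mul_sum]
  ring

end Curvature

end mergeGraph

open mergeGraph in
/-- If `G₁` and `G₂` are finite connected graphs with nonnegative
curvatures, then the graph `H` obtained by merging them at a vertex (identifying
`u ∈ V(G₁)` with `v ∈ V(G₂)`) has a curvature which is nonnegative at every vertex
except possibly the merged vertex. -/
theorem stmt_8 {V₁ V₂ : Type*} [Fintype V₁] [Fintype V₂] [DecidableEq V₂]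
    (G₁ : SimpleGraph V₁) (G₂ : SimpleGraph V₂)
    (hG₁ : G₁.Connected) (hG₂ : G₂.Connected)
    (D₁ : Matrix V₁ V₁ ℝ) (hD₁ : ∀ a b, D₁ a b = (G₁.dist a b : ℝ))
    (D₂ : Matrix V₂ V₂ ℝ) (hD₂ : ∀ a b, D₂ a b = (G₂.dist a b : ℝ))
    (w₁ : V₁ → ℝ) (hw₁0 : ∀ i, 0 ≤ w₁ i)
    (hw₁ : D₁.mulVec w₁ = fun _ => (Fintype.card V₁ : ℝ))
    (w₂ : V₂ → ℝ) (hw₂0 : ∀ i, 0 ≤ w₂ i)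
    (hw₂ : D₂.mulVec w₂ = fun _ => (Fintype.card V₂ : ℝ))
    (u : V₁) (v : V₂) :
    ∃ w : V₁ ⊕ {y : V₂ // y ≠ v} → ℝ,
      (Matrix.of fun a b => ((mergeGraph G₁ G₂ u v).dist a b : ℝ)).mulVec w
          = (fun _ => ((Fintype.card V₁ : ℝ) + (Fintype.card V₂ : ℝ) - 1)) ∧
        ∀ x, x ≠ Sum.inl u → 0 ≤ w x := by
  classical
  obtain rfl : D₁ = G₁.distMatrix ℝ := Matrix.ext hD₁
  obtain rfl : D₂ = G₂.distMatrix ℝ := Matrix.ext hD₂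
  have : Nonempty V₁ := hG₁.nonempty
  have : Nonempty V₂ := hG₂.nonempty
  have hS₁ : 0 < ∑ a, w₁ a :=
    sum_pos_of_mulVec_ne_zero (M := G₁.distMatrix ℝ) hw₁0 (by simp [hw₁, funext_iff])
  have hS₂ : 0 < ∑ y, w₂ y :=
    sum_pos_of_mulVec_ne_zero (M := G₂.distMatrix ℝ) hw₂0 (by simp [hw₂, funext_iff])
  have hcard : (1 : ℝ) ≤ Fintype.card V₁ := by exact_mod_cast Fintype.card_pos
  obtain ⟨c₁, c₂, hc₁, hc₂, hbal, hsum⟩ := exists_nonneg_mul_eq_mul_and_add_eq hS₁ hS₂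
    (n₁ := (Fintype.card V₁ : ℝ)) (n₂ := Fintype.card V₂)
    (m := Fintype.card V₁ + Fintype.card V₂ - 1) (by positivity) (by positivity)
    (by linarith [(Fintype.card V₂).cast_nonneg (α := ℝ)])
  refine ⟨mergeVec u v (c₁ • w₁) (c₂ • w₂) - Pi.single (.inl u) (c₁ * ∑ a, w₁ a), ?_, ?_⟩
  · ext x
    change ((mergeGraph G₁ G₂ u v).distMatrix ℝ *ᵥ _) x = _
    rw [mulVec_sub, Pi.sub_apply, mulVec_mergeVec hG₁ hG₂, mulVec_smul, mulVec_smul, hw₁, hw₂]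
    simp only [mulVec, dotProduct_single, distMatrix, of_apply, dist_eq hG₁ hG₂, toBoxProd_inl,
      Pi.smul_apply, smul_eq_mul, ← Finset.mul_sum, Nat.cast_add]
    linear_combination hsum - (G₁.dist (toBoxProd G₁ G₂ u v x).1 u : ℝ) * hbal
  · rintro (a | y) hx
    · have ha : a ≠ u := by rintro rfl; exact hx rfl
      simpa [mergeVec, Pi.single_apply, ha] using mul_nonneg hc₁ (hw₁0 a)
    · simpa [mergeVec] using mul_nonneg hc₂ (hw₂0 y)
end

section
/- Let G₁ and G₂ be finite connected simple graphs with n₁ and n₂ vertices and distance matrices D₁, D₂, each admitting a nonnegative curvature (an entrywise nonnegative wᵢ with Dᵢwᵢ = nᵢ·𝟏). Let G be the graph obtained by adding an edge between a vertex of G₁ and a vertex of G₂, with distance matrix D_G. Then rank(D_G) = rank(D₁) + rank(D₂). -/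
/-!
In the bridged graph a shortest path between the two sides crosses the new edge, so
`D_G = [[D₁, M], [Mᵀ, D₂]]` with `M a b = d₁(a, u) + 1 + d₂(v, b)`. A curvature puts `𝟏` in the
column space of `Dᵢ`, so `M = D₁ P Q D₂` with `D₁ P = [D₁(·, u) + 𝟏, 𝟏]` and
`Q D₂ = [𝟏; D₂(v, ·)]`. Block elimination leaves `rank D₁ + rank (D₂ (1 - Z))` with `Z` of rank
two, and by the matrix determinant lemma `det (1 - Z) = 4 - (2 + s₁) (2 + s₂)`, where
`sᵢ = 𝟏ᵀwᵢ / nᵢ` is positive because the curvature is nonnegative; so `1 - Z` is invertible.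
-/

/-- The graph obtained by adding an edge between the vertex `u` of `G₁` and the
vertex `v` of `G₂` (the graphs being on disjoint vertex sets). -/
def bridgeGraph {V₁ V₂ : Type*} (G₁ : SimpleGraph V₁) (G₂ : SimpleGraph V₂)
    (u : V₁) (v : V₂) : SimpleGraph (V₁ ⊕ V₂) :=
  SimpleGraph.fromRel (fun x y =>
    (∃ a b, x = Sum.inl a ∧ y = Sum.inl b ∧ G₁.Adj a b) ∨
    (∃ a b, x = Sum.inr a ∧ y = Sum.inr b ∧ G₂.Adj a b) ∨
    (x = Sum.inl u ∧ y = Sum.inr v))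

open Matrix

theorem Submodule.finrank_prod {K V W : Type*} [Field K] [AddCommGroup V] [Module K V]
    [AddCommGroup W] [Module K W] (p : Submodule K V) (q : Submodule K W)
    [FiniteDimensional K p] [FiniteDimensional K q] :
    Module.finrank K (p.prod q) = Module.finrank K p + Module.finrank K q := by
  have hinj : Function.Injective (p.subtype.prodMap q.subtype) :=
    Subtype.val_injective.prodMap Subtype.val_injective
  rw [← Module.finrank_prod, (LinearEquiv.ofInjective _ hinj).finrank_eq,
    LinearMap.range_prodMap, range_subtype, range_subtype]

namespace Matrix

variable {K : Type*} [Field K]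

theorem rank_fromBlocks_zero_zero {m n m' n' : Type*} [Fintype n] [Fintype n']
    (A : Matrix m n K) (D : Matrix m' n' K) :
    (fromBlocks A 0 0 D).rank = A.rank + D.rank := by
  have hmul : (fromBlocks A 0 0 D).mulVecLin =
      (LinearEquiv.sumArrowLequivProdArrow m m' K K).symm.toLinearMap ∘ₗ
        A.mulVecLin.prodMap D.mulVecLin ∘ₗ
        (LinearEquiv.sumArrowLequivProdArrow n n' K K).toLinearMap := by
    ext x (i | i) <;> simp only [LinearMap.coe_comp, Function.comp_apply, mulVecLin_apply,
      fromBlocks_mulVec, zero_mulVec, add_zero, zero_add, LinearMap.prodMap_apply,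
      LinearEquiv.coe_coe, LinearEquiv.sumArrowLequivProdArrow_symm_apply_inl,
      LinearEquiv.sumArrowLequivProdArrow_symm_apply_inr, Sum.elim_inl, Sum.elim_inr] <;> rfl
  rw [Matrix.rank, hmul, LinearMap.range_comp,
    LinearMap.range_comp_of_range_eq_top _ (LinearEquiv.range _),
    LinearEquiv.finrank_map_eq, LinearMap.range_prodMap, Submodule.finrank_prod]
  rfl

variable {m n : Type*} [Fintype m] [Fintype n] [DecidableEq m] [DecidableEq n]

theorem rank_fromBlocks_mul_mul (A : Matrix m m K) (X : Matrix m n K) (Y : Matrix n m K)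
    (D : Matrix n n K) :
    (fromBlocks A (A * X) (Y * A) D).rank = A.rank + (D - Y * A * X).rank := by
  have hdiag : fromBlocks 1 0 (-Y) 1 * fromBlocks A (A * X) (Y * A) D * fromBlocks 1 (-X) 0 1 =
      fromBlocks A 0 0 (D - Y * A * X) := by
    simp [fromBlocks_multiply, Matrix.mul_assoc, sub_eq_neg_add]
  rw [← rank_fromBlocks_zero_zero A, ← hdiag,
    rank_mul_eq_left_of_isUnit_det _ _ (by simp), rank_mul_eq_right_of_isUnit_det _ _ (by simp)]

theorem rank_fromBlocks_mul_mul_mul_mul {k : Type*} [Fintype k] [DecidableEq k]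
    {A : Matrix m m K} {B : Matrix n n K} (hA : Aᵀ = A) (hB : Bᵀ = B)
    (P : Matrix m k K) (Q : Matrix k n K) (h : IsUnit (1 - Pᵀ * A * P * (Q * B * Qᵀ)).det) :
    (fromBlocks A (A * P * Q * B) (A * P * Q * B)ᵀ B).rank = A.rank + B.rank := by
  have hT : (A * P * Q * B)ᵀ = (P * Q * B)ᵀ * A := by
    simp only [transpose_mul, hA, hB, Matrix.mul_assoc]
  have hSchur : B - (P * Q * B)ᵀ * A * (P * Q * B) = B * (1 - Qᵀ * (Pᵀ * A * P * (Q * B))) := by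
    simp only [transpose_mul, hB, Matrix.mul_sub, Matrix.mul_one, Matrix.mul_assoc]
  rw [hT, show A * P * Q * B = A * (P * Q * B) by simp only [Matrix.mul_assoc],
    rank_fromBlocks_mul_mul, hSchur, rank_mul_eq_left_of_isUnit_det]
  rwa [det_one_sub_mul_comm, Matrix.mul_assoc _ (Q * B)]

theorem rank_fromBlocks_bridge {A : Matrix m m K} {B : Matrix n n K} (hA : Aᵀ = A) (hB : Bᵀ = B)
    {u : m} {v : n} (hAu : A u u = 0) (hBv : B v v = 0) {x : m → K} {y : n → K}
    (hx : A *ᵥ x = 1) (hy : B *ᵥ y = 1) (hxy : (2 + ∑ i, x i) * (2 + ∑ j, y j) ≠ 4) :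
    (fromBlocks A (of fun a b => A a u + 1 + B v b) (of fun a b => A a u + 1 + B v b)ᵀ B).rank =
      A.rank + B.rank := by
  have hAx : ∀ a, ∑ c, A a c * x c = 1 := congrFun hx
  have hBy : ∀ b, ∑ c, B b c * y c = 1 := congrFun hy
  have hxA : ∀ a, ∑ c, x c * A c a = 1 :=
    congrFun (show x ᵥ* A = 1 by rw [← mulVec_transpose, hA, hx])
  have hyB : ∀ b, ∑ c, y c * B c b = 1 :=
    congrFun (show y ᵥ* B = 1 by rw [← mulVec_transpose, hB, hy])
  set P : Matrix m (Fin 2) K := of fun a i => ![(Pi.single u 1 : m → K) a + x a, x a] i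
  set Q : Matrix (Fin 2) n K := of ![y, (Pi.single v 1 : n → K)]
  have hAP : A * P = of fun a i => ![A a u + 1, 1] i := by
    ext a i
    fin_cases i <;> simp [P, mul_apply, mul_add, Finset.sum_add_distrib, hAx, Pi.single_apply]
  have hQB : Q * B = of ![1, fun b => B v b] := by
    ext i b
    fin_cases i <;> simp [Q, mul_apply, hyB, Pi.single_apply]
  have hM : A * P * Q * B = of fun a b => A a u + 1 + B v b := by
    rw [Matrix.mul_assoc, hAP, hQB]
    ext a b
    simp [mul_apply, Fin.sum_univ_two]
  have hPAP : Pᵀ * A * P = !![2 + ∑ i, x i, 1 + ∑ i, x i; 1 + ∑ i, x i, ∑ i, x i] := by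
    rw [Matrix.mul_assoc, hAP]
    ext i j
    fin_cases i <;> fin_cases j <;>
      simp [P, mul_apply, add_mul, mul_add, Finset.sum_add_distrib, hxA, Pi.single_apply, hAu,
        ← add_assoc, one_add_one_eq_two]
  have hQBQ : Q * B * Qᵀ = !![∑ j, y j, 1; 1, 0] := by
    rw [hQB]
    ext i j
    fin_cases i <;> fin_cases j <;> simp [Q, mul_apply, Pi.single_apply, hBv, hBy]
  rw [← hM]
  refine rank_fromBlocks_mul_mul_mul_mul hA hB P Q ?_
  rw [hPAP, hQBQ, isUnit_iff_ne_zero, mul_fin_two, det_fin_two]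
  simp only [sub_apply, one_apply_eq, one_apply_ne zero_ne_one, one_apply_ne one_ne_zero, of_apply,
    cons_val', cons_val_zero, cons_val_one, cons_val_fin_one]
  intro h
  apply hxy
  linear_combination -h

end Matrix

theorem Matrix.exists_mulVec_eq_one_of_curvature {n : Type*} [Fintype n] [Nonempty n]
    {D : Matrix n n ℝ} {w : n → ℝ} (hw0 : ∀ i, 0 ≤ w i)
    (hw : D *ᵥ w = fun _ => (Fintype.card n : ℝ)) :
    ∃ x : n → ℝ, D *ᵥ x = 1 ∧ 0 < ∑ i, x i := by
  have hcard : (Fintype.card n : ℝ) ≠ 0 := by positivity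
  have hsum : 0 < ∑ i, w i := by
    refine (Finset.sum_nonneg fun i _ => hw0 i).lt_of_ne fun hzero => hcard ?_
    have hw_zero : w = 0 := funext fun i =>
      (Finset.sum_eq_zero_iff_of_nonneg fun i _ => hw0 i).mp hzero.symm i (Finset.mem_univ i)
    simpa [hw_zero] using (congrFun hw (Classical.arbitrary n)).symm
  refine ⟨(Fintype.card n : ℝ)⁻¹ • w, ?_, ?_⟩
  · rw [mulVec_smul, hw]
    ext
    simp [hcard]
  · simp only [Pi.smul_apply, smul_eq_mul, ← Finset.mul_sum]
    exact mul_pos (by positivity) hsum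

namespace SimpleGraph

variable {V W : Type*} {G : SimpleGraph V} {H : SimpleGraph W}

theorem Adj.dist_le_dist_add_one {a b : V} (h : G.Adj a b) (c : V) :
    G.dist a c ≤ G.dist b c + 1 := by
  have := h.reachable.dist_triangle_left c
  rw [dist_eq_one_iff_adj.mpr h] at this
  omega

theorem Hom.dist_map_le (f : G →g H) {a b : V} (h : G.Reachable a b) :
    H.dist (f a) (f b) ≤ G.dist a b := by
  obtain ⟨p, hp⟩ := h.exists_walk_length_eq_dist
  simpa [hp] using dist_le (p.map f)

theorem le_dist_of_le_add_one_of_adj (d : V → V → ℕ) (hself : ∀ a, d a a = 0)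
    (hadj : ∀ a b c, G.Adj a b → d a c ≤ d b c + 1) {a b : V} (h : G.Reachable a b) :
    d a b ≤ G.dist a b := by
  suffices hwalk : ∀ {a b} (p : G.Walk a b), d a b ≤ p.length by
    obtain ⟨p, hp⟩ := h.exists_walk_length_eq_dist
    exact hp ▸ hwalk p
  intro a b p
  induction p with
  | nil => simp [hself]
  | cons hab _ ih => exact (hadj _ _ _ hab).trans (by simpa using ih)

end SimpleGraph

namespace bridgeGraph

open SimpleGraph

variable {V₁ V₂ : Type*} (G₁ : SimpleGraph V₁) (G₂ : SimpleGraph V₂) (u : V₁) (v : V₂)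

def inl : G₁ →g bridgeGraph G₁ G₂ u v :=
  ⟨Sum.inl, fun h => ⟨by simpa using h.ne, Or.inl (Or.inl ⟨_, _, rfl, rfl, h⟩)⟩⟩

def inr : G₂ →g bridgeGraph G₁ G₂ u v :=
  ⟨Sum.inr, fun h => ⟨by simpa using h.ne, Or.inl (Or.inr (Or.inl ⟨_, _, rfl, rfl, h⟩))⟩⟩

theorem adj_inl_inr : (bridgeGraph G₁ G₂ u v).Adj (Sum.inl u) (Sum.inr v) :=
  ⟨by simp, Or.inl (Or.inr (Or.inr ⟨rfl, rfl⟩))⟩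

/-- Distances in the bridged graph: a path between the two sides crosses the edge `uv`. -/
noncomputable def distFormula : V₁ ⊕ V₂ → V₁ ⊕ V₂ → ℕ
  | Sum.inl a, Sum.inl b => G₁.dist a b
  | Sum.inl a, Sum.inr b => G₁.dist a u + 1 + G₂.dist v b
  | Sum.inr a, Sum.inl b => G₂.dist a v + 1 + G₁.dist u b
  | Sum.inr a, Sum.inr b => G₂.dist a b

variable {G₁ G₂}

theorem connected (hG₁ : G₁.Connected) (hG₂ : G₂.Connected) :
    (bridgeGraph G₁ G₂ u v).Connected := by
  have hreach : ∀ x, (bridgeGraph G₁ G₂ u v).Reachable (Sum.inl u) x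
    | Sum.inl a => (hG₁ u a).map (inl G₁ G₂ u v)
    | Sum.inr b => (adj_inl_inr G₁ G₂ u v).reachable.trans ((hG₂ v b).map (inr G₁ G₂ u v))
  exact { preconnected := fun x y => (hreach x).symm.trans (hreach y), nonempty := ⟨Sum.inl u⟩ }

theorem distFormula_le_add_one_of_adj {x y : V₁ ⊕ V₂} (h : (bridgeGraph G₁ G₂ u v).Adj x y)
    (z : V₁ ⊕ V₂) :
    distFormula G₁ G₂ u v x z ≤ distFormula G₁ G₂ u v y z + 1 := by
  rw [bridgeGraph, fromRel_adj] at h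
  obtain ⟨-, h | h⟩ := h <;>
    rcases h with ⟨a, b, rfl, rfl, hab⟩ | ⟨a, b, rfl, rfl, hab⟩ | ⟨rfl, rfl⟩ <;>
    cases z <;> simp only [distFormula, dist_self] <;>
    first
    | omega
    | have := hab.dist_le_dist_add_one; have := hab.symm.dist_le_dist_add_one; grind

theorem distFormula_le_dist (hG₁ : G₁.Connected) (hG₂ : G₂.Connected) (x y : V₁ ⊕ V₂) :
    distFormula G₁ G₂ u v x y ≤ (bridgeGraph G₁ G₂ u v).dist x y := by
  refine le_dist_of_le_add_one_of_adj _ (fun x => ?_)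
    (fun _ _ z h => distFormula_le_add_one_of_adj u v h z)
    (connected u v hG₁ hG₂ x y)
  cases x <;> simp [distFormula]

theorem dist_inl_inl (hG₁ : G₁.Connected) (hG₂ : G₂.Connected) (a b : V₁) :
    (bridgeGraph G₁ G₂ u v).dist (Sum.inl a) (Sum.inl b) = G₁.dist a b :=
  le_antisymm ((inl G₁ G₂ u v).dist_map_le (hG₁ a b))
    (distFormula_le_dist u v hG₁ hG₂ (Sum.inl a) (Sum.inl b))

theorem dist_inr_inr (hG₁ : G₁.Connected) (hG₂ : G₂.Connected) (a b : V₂) :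
    (bridgeGraph G₁ G₂ u v).dist (Sum.inr a) (Sum.inr b) = G₂.dist a b :=
  le_antisymm ((inr G₁ G₂ u v).dist_map_le (hG₂ a b))
    (distFormula_le_dist u v hG₁ hG₂ (Sum.inr a) (Sum.inr b))

theorem dist_inl_inr (hG₁ : G₁.Connected) (hG₂ : G₂.Connected) (a : V₁) (b : V₂) :
    (bridgeGraph G₁ G₂ u v).dist (Sum.inl a) (Sum.inr b) = G₁.dist a u + 1 + G₂.dist v b := by
  refine le_antisymm ?_ (distFormula_le_dist u v hG₁ hG₂ (Sum.inl a) (Sum.inr b))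
  have hconn := connected u v hG₁ hG₂
  calc (bridgeGraph G₁ G₂ u v).dist (Sum.inl a) (Sum.inr b)
      ≤ (bridgeGraph G₁ G₂ u v).dist (Sum.inl a) (Sum.inl u) +
          ((bridgeGraph G₁ G₂ u v).dist (Sum.inl u) (Sum.inr v) +
            (bridgeGraph G₁ G₂ u v).dist (Sum.inr v) (Sum.inr b)) :=
        (hconn.dist_triangle).trans (Nat.add_le_add_left hconn.dist_triangle _)
    _ ≤ G₁.dist a u + (1 + G₂.dist v b) := by
        rw [dist_inl_inl u v hG₁ hG₂, dist_inr_inr u v hG₁ hG₂,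
          dist_eq_one_iff_adj.mpr (adj_inl_inr G₁ G₂ u v)]
    _ = G₁.dist a u + 1 + G₂.dist v b := (add_assoc _ _ _).symm

end bridgeGraph

/-- If `G₁` and `G₂` are finite connected graphs admitting nonnegative
curvatures and `G` is obtained by adding an edge between a vertex of `G₁` and a vertex
of `G₂`, then `rank(D_G) = rank(D₁) + rank(D₂)`. -/
theorem stmt_15 {V₁ V₂ : Type*} [Fintype V₁] [Fintype V₂]
    (G₁ : SimpleGraph V₁) (G₂ : SimpleGraph V₂)
    (hG₁ : G₁.Connected) (hG₂ : G₂.Connected)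
    (D₁ : Matrix V₁ V₁ ℝ) (hD₁ : ∀ a b, D₁ a b = (G₁.dist a b : ℝ))
    (D₂ : Matrix V₂ V₂ ℝ) (hD₂ : ∀ a b, D₂ a b = (G₂.dist a b : ℝ))
    (w₁ : V₁ → ℝ) (hw₁0 : ∀ i, 0 ≤ w₁ i)
    (hw₁ : D₁.mulVec w₁ = fun _ => (Fintype.card V₁ : ℝ))
    (w₂ : V₂ → ℝ) (hw₂0 : ∀ i, 0 ≤ w₂ i)
    (hw₂ : D₂.mulVec w₂ = fun _ => (Fintype.card V₂ : ℝ))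
    (u : V₁) (v : V₂)
    (DG : Matrix (V₁ ⊕ V₂) (V₁ ⊕ V₂) ℝ)
    (hDG : ∀ a b, DG a b = ((bridgeGraph G₁ G₂ u v).dist a b : ℝ)) :
    DG.rank = D₁.rank + D₂.rank := by
  classical
  have : Nonempty V₁ := ⟨u⟩
  have : Nonempty V₂ := ⟨v⟩
  obtain ⟨x, hx, hx0⟩ := exists_mulVec_eq_one_of_curvature hw₁0 hw₁
  obtain ⟨y, hy, hy0⟩ := exists_mulVec_eq_one_of_curvature hw₂0 hw₂
  have hDG_blocks : DG = fromBlocks D₁ (of fun a b => D₁ a u + 1 + D₂ v b)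
      (of fun a b => D₁ a u + 1 + D₂ v b)ᵀ D₂ := by
    ext (a | b) (a' | b')
    · simp [hDG, hD₁, bridgeGraph.dist_inl_inl u v hG₁ hG₂]
    · simp [hDG, hD₁, hD₂, bridgeGraph.dist_inl_inr u v hG₁ hG₂]
    · simp [hDG, hD₁, hD₂, SimpleGraph.dist_comm (u := Sum.inr b),
        bridgeGraph.dist_inl_inr u v hG₁ hG₂]
    · simp [hDG, hD₂, bridgeGraph.dist_inr_inr u v hG₁ hG₂]
  rw [hDG_blocks]
  refine rank_fromBlocks_bridge ?_ ?_ (by simp [hD₁]) (by simp [hD₂]) hx hy (by nlinarith)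
  · ext a b; simp [hD₁, SimpleGraph.dist_comm]
  · ext a b; simp [hD₂, SimpleGraph.dist_comm]
end
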